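/- arXiv:2001.09188 — 5 statements merged into one kernel-verified Lean document; each statement's English description precedes it below -/
import Mathlib

section
/- For every measurable set A ⊆ X, ∑_{k=1}^N ∫_{X^N} (∏_{i=1}^N q(xⁱ)) · (w(x^k)/∑_{j=1}^N w(x^j)) · (Ẑ(x)/Z̄_k(x)) · 1_A(x^k) dμ^{⊗N}(x) = (∫_A π dμ) · ∑_{k=1}^N ∫_{X^N} (∏_{i=1}^N q(xⁱ)) · (w(x^k)/∑_{j=1}^N w(x^j)) · (Ẑ(x)/Z̄_k(x)) dμ^{⊗N}(x); that is, the normalized marginal distribution of the accepted sample X = x^K in Ensemble Rejection Sampling equals π. -/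
/-! Replacing `w(x^k)` by `w̄` in the ensemble sum makes the factor
`(w(x^k) / ∑ⱼ w(x^j)) · (Ẑ / Z̄ₖ)` equal to `w(x^k) / (w̄ + ∑_{j ≠ k} w(x^j))`, so after
integrating out the other coordinates the `k`-th term of the marginal is `∫ q w g = ∫ γ g`
times a constant `C` independent of `k` and `g`. Since `q w = γ` almost everywhere, both sides
of the identity are `N · C · ∫_A γ`. -/

open MeasureTheory Finset

noncomputable section

/-- The ensemble estimate `Ẑ(x) = N⁻¹ ∑ᵢ w(xⁱ)`. -/
def ersZhat {X : Type*} (N : ℕ) (w : X → ℝ) (x : Fin N → X) : ℝ :=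
  (N : ℝ)⁻¹ * ∑ i, w (x i)

/-- The upper bound `Z̄ₖ(x) = Ẑ(x) + N⁻¹ (w̄ - w(x^k))`. -/
def ersZbar {X : Type*} (N : ℕ) (w : X → ℝ) (wbar : ℝ) (k : Fin N) (x : Fin N → X) : ℝ :=
  ersZhat N w x + (N : ℝ)⁻¹ * (wbar - w (x k))

lemma integral_pi_mul_comp_succAbove {X : Type*} [MeasurableSpace X] (μ : Measure X)
    [SigmaFinite μ] {L : Type*} [RCLike L] {m : ℕ} (k : Fin (m + 1)) (f : X → L)
    (g : (Fin m → X) → L) :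
    ∫ x : Fin (m + 1) → X, f (x k) * g (fun j => x (k.succAbove j))
        ∂(Measure.pi fun _ => μ)
      = (∫ a, f a ∂μ) * ∫ y, g y ∂(Measure.pi fun _ => μ) :=
  ((measurePreserving_piFinSuccAbove (fun _ => μ) k).integral_comp'
    (fun z => f z.1 * g z.2)).trans (integral_prod_mul f g)

lemma div_sum_mul_ersZhat_div_ersZbar {X : Type*} {w : X → ℝ} (hw : ∀ a, 0 ≤ w a)
    (wbar : ℝ) {m : ℕ} (k : Fin (m + 1)) (x : Fin (m + 1) → X) :
    (w (x k) / ∑ j, w (x j)) * (ersZhat (m + 1) w x / ersZbar (m + 1) w wbar k x)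
      = w (x k) / (wbar + ∑ j, w (x (k.succAbove j))) := by
  set S := ∑ j, w (x (k.succAbove j))
  have hsum : ∑ j, w (x j) = w (x k) + S := Fin.sum_univ_succAbove _ k
  have hZhat : ersZhat (m + 1) w x = ((m : ℝ) + 1)⁻¹ * (w (x k) + S) := by
    rw [ersZhat, hsum]; push_cast; ring
  have hZbar : ersZbar (m + 1) w wbar k x = ((m : ℝ) + 1)⁻¹ * (wbar + S) := by
    rw [ersZbar, hZhat]; push_cast; ring
  rw [hZhat, hZbar, hsum, mul_div_mul_left _ _ (by positivity)]
  by_cases h0 : w (x k) + S = 0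
  · have hS : 0 ≤ S := sum_nonneg fun j _ => hw _
    have hwk : w (x k) = 0 := by linarith [hw (x k)]
    simp [hwk]
  · rw [div_mul_div_cancel₀ h0]

lemma integral_ers_term {X : Type*} [MeasurableSpace X] (μ : Measure X) [SigmaFinite μ]
    (q : X → ℝ) {w : X → ℝ} (hw : ∀ a, 0 ≤ w a) (wbar : ℝ) {m : ℕ} (k : Fin (m + 1))
    (g : X → ℝ) :
    ∫ x : Fin (m + 1) → X,
        (∏ i, q (x i)) * (w (x k) / ∑ j, w (x j)) *
          (ersZhat (m + 1) w x / ersZbar (m + 1) w wbar k x) * g (x k)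
        ∂(Measure.pi fun _ => μ)
      = (∫ a, q a * w a * g a ∂μ) *
        ∫ y : Fin m → X, (∏ i, q (y i)) / (wbar + ∑ j, w (y j)) ∂(Measure.pi fun _ => μ) := by
  rw [← integral_pi_mul_comp_succAbove μ k]
  refine integral_congr_ae (Filter.Eventually.of_forall fun x => ?_)
  simp only
  rw [Fin.prod_univ_succAbove _ k, mul_assoc _ (w (x k) / _),
    div_sum_mul_ersZhat_div_ersZbar hw]
  ring

lemma ae_mul_div_cancel {X : Type*} [MeasurableSpace X] {μ : Measure X} {γ q : X → ℝ}
    (hγ : ∀ a, 0 ≤ γ a) (hnull : μ {a | 0 < γ a ∧ q a = 0} = 0) :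
    ∀ᵐ a ∂μ, q a * (γ a / q a) = γ a := by
  refine measure_mono_null (fun a ha => ?_) hnull
  by_cases hq : q a = 0
  · have hγa : γ a ≠ 0 := by simpa [hq, eq_comm] using ha
    exact ⟨(hγ a).lt_of_ne' hγa, hq⟩
  · exact absurd (mul_div_cancel₀ _ hq) ha

theorem ers_static_exactness_general
    {X : Type*} [MeasurableSpace X] (μ : Measure X) [SigmaFinite μ]
    (γ q : X → ℝ)
    (hγnn : ∀ x, 0 ≤ γ x) (hqnn : ∀ x, 0 ≤ q x)
    (hnull : μ {x | 0 < γ x ∧ q x = 0} = 0)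
    (Z : ℝ) (hZ : Z = ∫ x, γ x ∂μ) (hZpos : 0 < Z)
    (w : X → ℝ) (hw : ∀ x, w x = γ x / q x)
    (wbar : ℝ)
    (N : ℕ)
    (A : Set X) (hA : MeasurableSet A) :
    ∑ k : Fin N, ∫ x : Fin N → X,
        (∏ i, q (x i)) * (w (x k) / ∑ j, w (x j)) *
          (ersZhat N w x / ersZbar N w wbar k x) * A.indicator (1 : X → ℝ) (x k)
        ∂(Measure.pi fun _ : Fin N => μ)
    = (∫ a in A, γ a / Z ∂μ) *
      ∑ k : Fin N, ∫ x : Fin N → X,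
        (∏ i, q (x i)) * (w (x k) / ∑ j, w (x j)) *
          (ersZhat N w x / ersZbar N w wbar k x)
        ∂(Measure.pi fun _ : Fin N => μ) := by
  rcases N with _ | m
  · simp
  have hwnn : ∀ a, 0 ≤ w a := fun a => (hw a).symm ▸ div_nonneg (hγnn a) (hqnn a)
  have hqw : ∀ᵐ a ∂μ, q a * w a = γ a := by simpa only [hw] using ae_mul_div_cancel hγnn hnull
  have hγA : ∫ a, q a * w a * A.indicator 1 a ∂μ = ∫ a in A, γ a ∂μ := by
    rw [← integral_indicator hA]
    refine integral_congr_ae ?_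
    filter_upwards [hqw] with a ha
    by_cases haA : a ∈ A <;> simp [haA, ha]
  have hmass : ∀ k : Fin (m + 1), ∫ x : Fin (m + 1) → X,
        (∏ i, q (x i)) * (w (x k) / ∑ j, w (x j)) *
          (ersZhat (m + 1) w x / ersZbar (m + 1) w wbar k x) ∂(Measure.pi fun _ => μ)
      = Z * ∫ y : Fin m → X, (∏ i, q (y i)) / (wbar + ∑ j, w (y j))
          ∂(Measure.pi fun _ => μ) := fun k => by
    simpa [hZ, integral_congr_ae hqw] using integral_ers_term μ q hwnn wbar k fun _ => 1
  simp_rw [integral_ers_term μ q hwnn wbar _ (A.indicator 1), hγA, hmass, sum_const, card_univ,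
    Fintype.card_fin, nsmul_eq_mul, integral_div]
  field_simp

/-- The normalized marginal distribution of the accepted sample of
static Ensemble Rejection Sampling equals `π = γ/Z`. -/
theorem ers_static_exactness
    {X : Type*} [MeasurableSpace X] (μ : Measure X) [SigmaFinite μ]
    (γ q : X → ℝ) (hγm : Measurable γ) (hqm : Measurable q)
    (hγnn : ∀ x, 0 ≤ γ x) (hqnn : ∀ x, 0 ≤ q x)
    (hqprob : ∫ x, q x ∂μ = 1)
    (hnull : μ {x | 0 < γ x ∧ q x = 0} = 0)
    (Z : ℝ) (hZ : Z = ∫ x, γ x ∂μ) (hZpos : 0 < Z) (hγint : Integrable γ μ)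
    (w : X → ℝ) (hw : ∀ x, w x = γ x / q x)
    (wbar : ℝ) (hwbound : ∀ᵐ x ∂μ, 0 < q x → 0 < w x ∧ w x ≤ wbar)
    (N : ℕ) (hN : 1 ≤ N)
    (A : Set X) (hA : MeasurableSet A) :
    ∑ k : Fin N, ∫ x : Fin N → X,
        (∏ i, q (x i)) * (w (x k) / ∑ j, w (x j)) *
          (ersZhat N w x / ersZbar N w wbar k x) * A.indicator (1 : X → ℝ) (x k)
        ∂(Measure.pi fun _ : Fin N => μ)
    = (∫ a in A, γ a / Z ∂μ) *
      ∑ k : Fin N, ∫ x : Fin N → X,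
        (∏ i, q (x i)) * (w (x k) / ∑ j, w (x j)) *
          (ersZhat N w x / ersZbar N w wbar k x)
        ∂(Measure.pi fun _ : Fin N => μ) :=
  ers_static_exactness_general μ γ q hγnn hqnn hnull Z hZ hZpos w hw wbar N A hA
end
end

section
/- For each N ≥ 1 let p_ERS(N) := ∑_{k=1}^N ∫_{X^N} (∏_{i=1}^N q(xⁱ)) · (w(x^k)/∑_{j=1}^N w(x^j)) · (Ẑ(x)/Z̄_k(x)) dμ^{⊗N}(x). Then p_ERS(N) → 1 as N → ∞. -/
/-!
Let `ν` be the probability measure with density `q`, so that the `N`-th term is an integral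
against `ν^N`, under which `0 < w ≤ w̄` a.s. There the `k`-th integrand reduces to
`w(xᵏ) / (S + w̄ - w(xᵏ))` with `S = ∑ⱼ w(xʲ)`, and the sum over `k` lies between
`S / (S + w̄)` and `1`. The sum `S` has mean `N m`, `m = 𝔼_ν w > 0`, and variance at most
`N w̄ m` (Bhatia–Davis), so a pointwise Chebyshev bound gives `𝔼 [S / (S + w̄)] ≥ 1 - 6 w̄ / (N m)`.
-/

open MeasureTheory ProbabilityTheory Finset Filter

noncomputable section

section SumBounds

variable {ι : Type*} [Fintype ι] {w : ι → ℝ} {c : ℝ}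

lemma le_sum_add_sub (hw : ∀ k, 0 ≤ w k) (k : ι) : c ≤ ∑ j, w j + (c - w k) := by
  linarith [single_le_sum (fun j _ ↦ hw j) (mem_univ k)]

lemma sum_div_sum_add_sub_le_one (hw : ∀ k, 0 < w k) (hc : ∀ k, w k ≤ c) :
    ∑ k, w k / (∑ j, w j + (c - w k)) ≤ 1 := by
  rcases isEmpty_or_nonempty ι with _ | _
  · simp
  have hS : 0 < ∑ j, w j := sum_pos (fun j _ ↦ hw j) univ_nonempty
  calc ∑ k, w k / (∑ j, w j + (c - w k)) ≤ ∑ k, w k / ∑ j, w j :=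
        sum_le_sum fun k _ ↦ div_le_div_of_nonneg_left (hw k).le hS (by linarith [hc k])
    _ = 1 := by rw [← sum_div, div_self hS.ne']

lemma sum_div_sum_add_le_sum_div_sum_add_sub (hw : ∀ k, 0 < w k) (hc : ∀ k, w k ≤ c) :
    (∑ j, w j) / (∑ j, w j + c) ≤ ∑ k, w k / (∑ j, w j + (c - w k)) := by
  rw [sum_div]
  refine sum_le_sum fun k _ ↦ div_le_div_of_nonneg_left (hw k).le ?_ (by linarith [hw k])
  linarith [hw k, hc k, le_sum_add_sub (c := c) (fun j ↦ (hw j).le) k]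

end SumBounds

/-- Either `s ≥ a / 2`, or the Chebyshev term `4 (s - a)² / a²` exceeds `1`. -/
lemma one_sub_le_div_add {s a c : ℝ} (hs : 0 ≤ s) (ha : 0 < a) (hc : 0 < c) :
    1 - 2 * c / a - 4 / a ^ 2 * (s - a) ^ 2 ≤ s / (s + c) := by
  have hsq : 0 ≤ 4 / a ^ 2 * (s - a) ^ 2 := by positivity
  rcases le_or_gt (a / 2) s with hsa | hsa
  · have hfrac : c / (s + c) ≤ 2 * c / a := by
      rw [div_le_div_iff₀ (by positivity) ha]
      nlinarith
    have hsplit : s / (s + c) = 1 - c / (s + c) := by field_simp; ring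
    linarith
  · have hfar : 1 < 4 / a ^ 2 * (s - a) ^ 2 := by
      rw [div_mul_eq_mul_div, one_lt_div (by positivity)]
      nlinarith
    have : 0 ≤ 2 * c / a := by positivity
    have : 0 ≤ s / (s + c) := by positivity
    linarith

lemma ersZhat_div_ersZbar {X : Type*} {N : ℕ} (hN : N ≠ 0) (w : X → ℝ) (wbar : ℝ) (k : Fin N)
    (x : Fin N → X) :
    ersZhat N w x / ersZbar N w wbar k x =
      (∑ j, w (x j)) / (∑ j, w (x j) + (wbar - w (x k))) := by
  rw [ersZbar, ersZhat, ← mul_add, mul_div_mul_left _ _ (by positivity)]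

section ChangeOfMeasure

variable {ι : Type*} [Fintype ι] {X : ι → Type*} [∀ i, MeasurableSpace (X i)]
  (μ : ∀ i, Measure (X i)) [∀ i, SigmaFinite (μ i)] {f : ∀ i, X i → ℝ}

theorem pi_withDensity_ofReal (hf : ∀ i, Integrable (f i) (μ i)) (hf₀ : ∀ i, 0 ≤ f i) :
    Measure.pi (fun i ↦ (μ i).withDensity fun x ↦ ENNReal.ofReal (f i x)) =
      (Measure.pi μ).withDensity fun x ↦ ∏ i, ENNReal.ofReal (f i (x i)) := by
  have : ∀ i, IsFiniteMeasure ((μ i).withDensity fun x ↦ ENNReal.ofReal (f i x)) :=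
    fun i ↦ isFiniteMeasure_withDensity_ofReal (hf i).2
  refine Measure.pi_eq fun s hs ↦ ?_
  rw [withDensity_apply' _ _, Measure.restrict_pi_pi]
  simp_rw [← ENNReal.ofReal_prod_of_nonneg fun i _ ↦ hf₀ i _]
  rw [← ofReal_integral_eq_lintegral_ofReal, integral_fintype_prod_eq_prod,
    ENNReal.ofReal_prod_of_nonneg]
  · refine Finset.prod_congr rfl fun i _ ↦ ?_
    rw [withDensity_apply _ (hs i), ofReal_integral_eq_lintegral_ofReal (hf i).integrableOn
      (ae_of_all _ (hf₀ i))]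
  · exact fun i _ ↦ integral_nonneg (hf₀ i)
  · exact Integrable.fintype_prod_dep fun i ↦ (hf i).integrableOn
  · exact ae_of_all _ fun x ↦ Finset.prod_nonneg fun i _ ↦ hf₀ i _

theorem integral_pi_withDensity_ofReal (hfm : ∀ i, Measurable (f i))
    (hf : ∀ i, Integrable (f i) (μ i)) (hf₀ : ∀ i, 0 ≤ f i) (g : (∀ i, X i) → ℝ) :
    ∫ x, g x ∂Measure.pi (fun i ↦ (μ i).withDensity fun x ↦ ENNReal.ofReal (f i x)) =
      ∫ x, (∏ i, f i (x i)) * g x ∂Measure.pi μ := by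
  rw [pi_withDensity_ofReal μ hf hf₀, integral_withDensity_eq_integral_toReal_smul
    (by fun_prop) (ae_of_all _ fun x ↦ ENNReal.prod_lt_top fun i _ ↦ ENNReal.ofReal_lt_top)]
  simp_rw [ENNReal.toReal_prod, ENNReal.toReal_ofReal (hf₀ _ _), smul_eq_mul]

end ChangeOfMeasure

lemma integral_pos_of_ae_pos {X : Type*} [MeasurableSpace X] {μ : Measure X} [NeZero μ]
    {f : X → ℝ} (hf : ∀ᵐ x ∂μ, 0 < f x) (hfi : Integrable f μ) : 0 < ∫ x, f x ∂μ := by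
  refine (integral_pos_iff_support_of_nonneg_ae (hf.mono fun x hx ↦ hx.le) hfi).2 ?_
  refine pos_iff_ne_zero.2 fun h0 ↦ ?_
  obtain ⟨x, hx, hpos⟩ := ((measure_eq_zero_iff_ae_notMem.1 h0).and hf).exists
  exact hx hpos.ne'

lemma ae_pi_forall_of_ae {ι : Type*} [Fintype ι] {X : Type*} [MeasurableSpace X] {μ : Measure X}
    [SigmaFinite μ] {p : X → Prop} (h : ∀ᵐ x ∂μ, p x) :
    ∀ᵐ x ∂Measure.pi fun _ : ι ↦ μ, ∀ i, p (x i) :=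
  eventually_all.2 fun _ ↦ Measure.tendsto_eval_ae_ae.eventually h

/-- `p_ERS(N)` when the proposal distribution `q μ` is `P`. -/
def ersAcceptance {X : Type*} [MeasurableSpace X] (P : Measure X) (w : X → ℝ) (wbar : ℝ)
    (N : ℕ) : ℝ :=
  ∑ k : Fin N, ∫ x : Fin N → X, (w (x k) / ∑ j, w (x j)) * (ersZhat N w x / ersZbar N w wbar k x)
    ∂Measure.pi fun _ ↦ P

section Acceptance

variable {X : Type*} [MeasurableSpace X] {P : Measure X} [IsProbabilityMeasure P] {w : X → ℝ}
  {wbar : ℝ} {N : ℕ}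

lemma memLp_sum_eval (hwm : Measurable w) (hw : ∀ᵐ x ∂P, w x ∈ Set.Icc 0 wbar) :
    MemLp (fun x : Fin N → X ↦ ∑ i, w (x i)) 2 (Measure.pi fun _ ↦ P) :=
  memLp_finsetSum _ fun i _ ↦ (memLp_of_bounded hw hwm.aestronglyMeasurable 2).comp_measurePreserving
    (measurePreserving_eval _ i)

lemma integral_sq_sum_sub_le (hwm : Measurable w) (hw : ∀ᵐ x ∂P, w x ∈ Set.Icc 0 wbar) :
    ∫ x, (∑ i, w (x i) - N * ∫ y, w y ∂P) ^ 2 ∂(Measure.pi fun _ : Fin N ↦ P) ≤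
      N * (wbar * ∫ y, w y ∂P) := by
  have hmem : MemLp w 2 P := memLp_of_bounded hw hwm.aestronglyMeasurable 2
  have hmean : ∫ x, ∑ i, w (x i) ∂(Measure.pi fun _ : Fin N ↦ P) = N * ∫ y, w y ∂P := by
    rw [integral_finsetSum _ fun i _ ↦ integrable_comp_eval (hmem.integrable one_le_two)]
    simp [integral_comp_eval (μ := fun _ : Fin N ↦ P) hwm.aestronglyMeasurable]
  have hvar := variance_sum_pi (μ := fun _ : Fin N ↦ P) fun _ ↦ hmem
  rw [variance_eq_integral (by fun_prop)] at hvar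
  simp only [Finset.sum_apply, hmean, sum_const, card_univ, Fintype.card_fin, nsmul_eq_mul] at hvar
  rw [hvar]
  have hm : 0 ≤ ∫ y, w y ∂P := integral_nonneg_of_ae (hw.mono fun x hx ↦ hx.1)
  have := variance_le_sub_mul_sub hw hwm.aemeasurable
  gcongr
  nlinarith

lemma integrable_div_sum_add_sub (hwm : Measurable w) (hw : ∀ᵐ x ∂P, 0 < w x ∧ w x ≤ wbar)
    (k : Fin N) :
    Integrable (fun x : Fin N → X ↦ w (x k) / (∑ j, w (x j) + (wbar - w (x k))))
      (Measure.pi fun _ ↦ P) := by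
  refine Integrable.of_bound (Measurable.aestronglyMeasurable (by fun_prop)) 1
    ((ae_pi_forall_of_ae hw).mono fun x hx ↦ ?_)
  have hD := (hx k).2.trans (le_sum_add_sub (fun j ↦ (hx j).1.le) k)
  rw [Real.norm_of_nonneg (div_nonneg (hx k).1.le (by linarith [(hx k).1]))]
  exact div_le_one_of_le₀ hD (by linarith [(hx k).1])

lemma ersAcceptance_eq_integral (hwm : Measurable w) (hw : ∀ᵐ x ∂P, 0 < w x ∧ w x ≤ wbar)
    (hN : N ≠ 0) :
    ersAcceptance P w wbar N =
      ∫ x : Fin N → X, ∑ k, w (x k) / (∑ j, w (x j) + (wbar - w (x k)))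
        ∂Measure.pi fun _ ↦ P := by
  have : Nonempty (Fin N) := ⟨⟨0, Nat.pos_of_ne_zero hN⟩⟩
  rw [integral_finsetSum _ fun k _ ↦ integrable_div_sum_add_sub hwm hw k]
  refine sum_congr rfl fun k _ ↦ integral_congr_ae ((ae_pi_forall_of_ae hw).mono fun x hx ↦ ?_)
  have hS : 0 < ∑ j, w (x j) := sum_pos (fun j _ ↦ (hx j).1) univ_nonempty
  dsimp only
  rw [ersZhat_div_ersZbar hN, div_mul_div_cancel₀ hS.ne']

lemma ersAcceptance_le_one (hwm : Measurable w) (hw : ∀ᵐ x ∂P, 0 < w x ∧ w x ≤ wbar)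
    (hN : N ≠ 0) : ersAcceptance P w wbar N ≤ 1 := by
  rw [ersAcceptance_eq_integral hwm hw hN]
  refine (integral_mono_ae (integrable_finsetSum _ fun k _ ↦ integrable_div_sum_add_sub hwm hw k)
    (integrable_const 1) ((ae_pi_forall_of_ae hw).mono fun x hx ↦
      sum_div_sum_add_sub_le_one (fun i ↦ (hx i).1) fun i ↦ (hx i).2)).trans ?_
  simp

lemma one_sub_le_ersAcceptance (hwm : Measurable w) (hw : ∀ᵐ x ∂P, 0 < w x ∧ w x ≤ wbar)
    (hN : N ≠ 0) : 1 - 6 * wbar / (N * ∫ y, w y ∂P) ≤ ersAcceptance P w wbar N := by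
  obtain ⟨x₀, hx₀⟩ := hw.exists
  have hwbar : 0 < wbar := hx₀.1.trans_le hx₀.2
  have hIcc : ∀ᵐ x ∂P, w x ∈ Set.Icc 0 wbar := hw.mono fun x hx ↦ ⟨hx.1.le, hx.2⟩
  set m := ∫ y, w y ∂P
  have hm : 0 < m := integral_pos_of_ae_pos (hw.mono fun x hx ↦ hx.1)
    ((memLp_of_bounded hIcc hwm.aestronglyMeasurable 1).integrable le_rfl)
  have ha : (0 : ℝ) < N * m := mul_pos (by positivity) hm
  have hsq : Integrable (fun x : Fin N → X ↦ (∑ j, w (x j) - N * m) ^ 2)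
      (Measure.pi fun _ ↦ P) :=
    ((memLp_sum_eval hwm hIcc).sub (memLp_const ((N : ℝ) * m))).integrable_sq
  have hpt : ∀ᵐ x ∂Measure.pi fun _ : Fin N ↦ P,
      1 - 2 * wbar / (N * m) - 4 / (N * m) ^ 2 * (∑ j, w (x j) - N * m) ^ 2 ≤
        ∑ k, w (x k) / (∑ j, w (x j) + (wbar - w (x k))) :=
    (ae_pi_forall_of_ae hw).mono fun x hx ↦
      (one_sub_le_div_add (sum_nonneg fun j _ ↦ (hx j).1.le) ha hwbar).trans
        (sum_div_sum_add_le_sum_div_sum_add_sub (fun i ↦ (hx i).1) fun i ↦ (hx i).2)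
  rw [ersAcceptance_eq_integral hwm hw hN]
  calc 1 - 6 * wbar / (N * m) = 1 - 2 * wbar / (N * m) - 4 / (N * m) ^ 2 * (N * (wbar * m)) := by
        field_simp
        ring
    _ ≤ 1 - 2 * wbar / (N * m) - 4 / (N * m) ^ 2 *
          ∫ x, (∑ j, w (x j) - N * m) ^ 2 ∂Measure.pi fun _ : Fin N ↦ P := by
        gcongr
        exact integral_sq_sum_sub_le hwm hIcc
    _ = ∫ x, 1 - 2 * wbar / (N * m) - 4 / (N * m) ^ 2 * (∑ j, w (x j) - N * m) ^ 2
          ∂Measure.pi fun _ : Fin N ↦ P := by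
        rw [integral_sub (integrable_const _) (hsq.const_mul _), integral_const_mul]
        simp
    _ ≤ _ := integral_mono_ae ((integrable_const _).sub (hsq.const_mul _))
        (integrable_finsetSum _ fun k _ ↦ integrable_div_sum_add_sub hwm hw k) hpt

theorem tendsto_ersAcceptance_one (hwm : Measurable w) (hw : ∀ᵐ x ∂P, 0 < w x ∧ w x ≤ wbar) :
    Tendsto (ersAcceptance P w wbar) atTop (nhds 1) := by
  have hlim : Tendsto (fun N : ℕ ↦ 1 - 6 * wbar / (N * ∫ y, w y ∂P)) atTop (nhds 1) := by
    simpa [mul_comm, ← div_div] using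
      tendsto_const_nhds.sub (tendsto_const_div_atTop_nhds_zero_nat (6 * wbar / ∫ y, w y ∂P))
  refine tendsto_of_tendsto_of_tendsto_of_le_of_le' hlim tendsto_const_nhds ?_ ?_ <;>
    filter_upwards [eventually_ne_atTop 0] with N hN
  exacts [one_sub_le_ersAcceptance hwm hw hN, ersAcceptance_le_one hwm hw hN]

end Acceptance

theorem ers_static_acceptance_tendsto_one_general
    {X : Type*} [MeasurableSpace X] (μ : Measure X) [SigmaFinite μ]
    (γ q : X → ℝ) (hγm : Measurable γ) (hqm : Measurable q)
    (hqnn : ∀ x, 0 ≤ q x)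
    (hqprob : ∫ x, q x ∂μ = 1)
    (w : X → ℝ) (hw : ∀ x, w x = γ x / q x)
    (wbar : ℝ) (hwbound : ∀ᵐ x ∂μ, 0 < q x → 0 < w x ∧ w x ≤ wbar) :
    Tendsto (fun N : ℕ =>
      ∑ k : Fin N, ∫ x : Fin N → X,
        (∏ i, q (x i)) * (w (x k) / ∑ j, w (x j)) *
          (ersZhat N w x / ersZbar N w wbar k x)
        ∂(Measure.pi fun _ : Fin N => μ)) atTop (nhds 1) := by
  have hwm : Measurable w := (funext hw : w = fun x ↦ γ x / q x) ▸ hγm.div hqm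
  have hqint : Integrable q μ := by
    by_contra h
    simp [integral_undef h] at hqprob
  set ν := μ.withDensity fun x ↦ ENNReal.ofReal (q x)
  have : IsProbabilityMeasure ν := ⟨by
    rw [withDensity_apply _ MeasurableSet.univ, Measure.restrict_univ,
      ← ofReal_integral_eq_lintegral_ofReal hqint (ae_of_all _ hqnn), hqprob, ENNReal.ofReal_one]⟩
  have hwν : ∀ᵐ x ∂ν, 0 < w x ∧ w x ≤ wbar :=
    (ae_withDensity_iff hqm.ennreal_ofReal).2 <| hwbound.mono fun x hx hq ↦
      hx (ENNReal.ofReal_pos.1 (pos_iff_ne_zero.2 hq))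
  convert tendsto_ersAcceptance_one hwm hwν using 2 with N
  unfold ersAcceptance
  refine sum_congr rfl fun k _ ↦ ?_
  simp_rw [mul_assoc]
  exact (integral_pi_withDensity_ofReal (fun _ ↦ μ) (fun _ ↦ hqm) (fun _ ↦ hqint)
    (fun _ ↦ hqnn) _).symm

/-- The average acceptance probability of static Ensemble Rejection
Sampling tends to `1` as the ensemble size `N` tends to infinity. -/
theorem ers_static_acceptance_tendsto_one
    {X : Type*} [MeasurableSpace X] (μ : Measure X) [SigmaFinite μ]
    (γ q : X → ℝ) (hγm : Measurable γ) (hqm : Measurable q)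
    (hγnn : ∀ x, 0 ≤ γ x) (hqnn : ∀ x, 0 ≤ q x)
    (hqprob : ∫ x, q x ∂μ = 1)
    (hnull : μ {x | 0 < γ x ∧ q x = 0} = 0)
    (Z : ℝ) (hZ : Z = ∫ x, γ x ∂μ) (hZpos : 0 < Z) (hγint : Integrable γ μ)
    (w : X → ℝ) (hw : ∀ x, w x = γ x / q x)
    (wbar : ℝ) (hwbound : ∀ᵐ x ∂μ, 0 < q x → 0 < w x ∧ w x ≤ wbar) :
    Tendsto (fun N : ℕ =>
      ∑ k : Fin N, ∫ x : Fin N → X,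
        (∏ i, q (x i)) * (w (x k) / ∑ j, w (x j)) *
          (ersZhat N w x / ersZbar N w wbar k x)
        ∂(Measure.pi fun _ : Fin N => μ)) atTop (nhds 1) :=
  ers_static_acceptance_tendsto_one_general μ γ q hγm hqm hqnn hqprob w hw wbar hwbound

end
end

section
/- The identity ∑_{k=1}^N ∫_{X^N} (∏_{i=1}^N q(xⁱ)) · (w(x^k)/∑_{j=1}^N w(x^j)) · (Ẑ(x)/Z̄_k(x)) dμ^{⊗N}(x) = Z · ∑_{k=1}^N ∫_{X^N} (π(x^k)/N) · (∏_{i=1, i≠k}^N q(xⁱ)) · (1/Z̄_k(x)) dμ^{⊗N}(x) holds; that is, the average ERS acceptance probability E_{q̄}[Ẑ/Z̄] equals Z · E_{π̃}[1/Z̄]. -/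
/-!
The two sides agree term by term in `k`, and in fact their integrands agree almost everywhere.
Since `{γ > 0, q = 0}` is null, `q(x^k) w(x^k) = γ(x^k)` for a.e. `x`, which turns the factor
`q(x^k)` of `∏ᵢ q(xⁱ)` into `γ(x^k) = Z π(x^k)`; and the self-normalised weight cancels against
the estimate, `(w(x^k) / ∑ⱼ w(xʲ)) ⬝ Ẑ(x) = w(x^k) / N`.
-/

open MeasureTheory Finset

noncomputable section

theorem ae_mul_div_cancel_of_null {X : Type*} [MeasurableSpace X] {μ : Measure X}
    {f g : X → ℝ} (hg : ∀ x, 0 ≤ g x) (hnull : μ {x | 0 < g x ∧ f x = 0} = 0) :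
    ∀ᵐ x ∂μ, f x * (g x / f x) = g x := by
  refine measure_mono_null (fun x hx => ?_) hnull
  by_cases hf : f x = 0
  · exact ⟨(hg x).lt_of_ne fun h => hx (by simp [hf, ← h]), hf⟩
  · exact absurd (mul_div_cancel₀ _ hf) hx

theorem div_sum_mul_ersZhat {X : Type*} {N : ℕ} {w : X → ℝ} {x : Fin N → X}
    (hw : ∀ i, 0 ≤ w (x i)) (k : Fin N) :
    w (x k) / (∑ j, w (x j)) * ersZhat N w x = (N : ℝ)⁻¹ * w (x k) := by
  rw [ersZhat, mul_left_comm, div_mul_cancel_of_imp fun hs =>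
    (sum_eq_zero_iff_of_nonneg fun i _ => hw i).mp hs k (mem_univ k)]

theorem ers_integrand_eq {X : Type*} {N : ℕ} {γ q w : X → ℝ} {wbar Z : ℝ} (hZ : Z ≠ 0)
    {x : Fin N → X} (hw : ∀ i, 0 ≤ w (x i)) {k : Fin N} (hk : q (x k) * w (x k) = γ (x k)) :
    (∏ i, q (x i)) * (w (x k) / ∑ j, w (x j)) * (ersZhat N w x / ersZbar N w wbar k x)
      = Z * ((γ (x k) / Z) / (N : ℝ) * (∏ i ∈ univ.erase k, q (x i)) *
          (ersZbar N w wbar k x)⁻¹) := by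
  rw [← mul_prod_erase univ _ (mem_univ k), ← hk]
  set P := ∏ i ∈ univ.erase k, q (x i)
  set Zbar := ersZbar N w wbar k x
  linear_combination (q (x k) * P * Zbar⁻¹) * div_sum_mul_ersZhat hw k
    - (q (x k) * w (x k) * (N : ℝ)⁻¹ * P * Zbar⁻¹) * mul_inv_cancel₀ hZ

theorem ers_static_acceptance_identity_general
    {X : Type*} [MeasurableSpace X] (μ : Measure X) [SigmaFinite μ]
    (γ q : X → ℝ)
    (hγnn : ∀ x, 0 ≤ γ x) (hqnn : ∀ x, 0 ≤ q x)
    (hnull : μ {x | 0 < γ x ∧ q x = 0} = 0)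
    (Z : ℝ) (hZpos : 0 < Z)
    (w : X → ℝ) (hw : ∀ x, w x = γ x / q x)
    (wbar : ℝ)
    (N : ℕ) :
    ∑ k : Fin N, ∫ x : Fin N → X,
        (∏ i, q (x i)) * (w (x k) / ∑ j, w (x j)) *
          (ersZhat N w x / ersZbar N w wbar k x)
        ∂(Measure.pi fun _ : Fin N => μ)
    = Z * ∑ k : Fin N, ∫ x : Fin N → X,
        ((γ (x k) / Z) / (N : ℝ)) * (∏ i ∈ Finset.univ.erase k, q (x i)) *
          (ersZbar N w wbar k x)⁻¹
        ∂(Measure.pi fun _ : Fin N => μ) := by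
  have hwnn (y : X) : 0 ≤ w y := hw y ▸ div_nonneg (hγnn y) (hqnn y)
  have hqw : ∀ᵐ y ∂μ, q y * w y = γ y := by
    simpa only [hw] using ae_mul_div_cancel_of_null hγnn hnull
  rw [mul_sum]
  refine sum_congr rfl fun k _ => ?_
  rw [← integral_const_mul]
  refine integral_congr_ae ?_
  filter_upwards [Measure.tendsto_eval_ae_ae.eventually hqw] with x hx
  exact ers_integrand_eq hZpos.ne' (fun i => hwnn (x i)) hx

/-- The average ERS acceptance probability `E_q̄[Ẑ/Z̄]` equals
`Z ⬝ E_π̃[1/Z̄]`, where `π̃` has density `(π(x^k)/N) ∏_{i≠k} q(xⁱ)`. -/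
theorem ers_static_acceptance_identity
    {X : Type*} [MeasurableSpace X] (μ : Measure X) [SigmaFinite μ]
    (γ q : X → ℝ) (hγm : Measurable γ) (hqm : Measurable q)
    (hγnn : ∀ x, 0 ≤ γ x) (hqnn : ∀ x, 0 ≤ q x)
    (hqprob : ∫ x, q x ∂μ = 1)
    (hnull : μ {x | 0 < γ x ∧ q x = 0} = 0)
    (Z : ℝ) (hZ : Z = ∫ x, γ x ∂μ) (hZpos : 0 < Z) (hγint : Integrable γ μ)
    (w : X → ℝ) (hw : ∀ x, w x = γ x / q x)
    (wbar : ℝ) (hwbound : ∀ᵐ x ∂μ, 0 < q x → 0 < w x ∧ w x ≤ wbar)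
    (N : ℕ) (hN : 1 ≤ N) :
    ∑ k : Fin N, ∫ x : Fin N → X,
        (∏ i, q (x i)) * (w (x k) / ∑ j, w (x j)) *
          (ersZhat N w x / ersZbar N w wbar k x)
        ∂(Measure.pi fun _ : Fin N => μ)
    = Z * ∑ k : Fin N, ∫ x : Fin N → X,
        ((γ (x k) / Z) / (N : ℝ)) * (∏ i ∈ Finset.univ.erase k, q (x i)) *
          (ersZbar N w wbar k x)⁻¹
        ∂(Measure.pi fun _ : Fin N => μ) :=
  ers_static_acceptance_identity_general μ γ q hγnn hqnn hnull Z hZpos w hw wbar N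
end
end

section
/- The output of the bounding hidden Markov model recursion dominates the ensemble estimator: for every grid x ∈ X^{T×N} and every selected multi-index k_{1:T} ∈ [N]^T, if w₁(y) ≤ w̄₁ for all y ∈ X, w_t(y,y') ≤ w̄_t for all y,y' ∈ X, w_t(y, y') ≤ w̄_t¹(y) for all y, y' ∈ X, and w_t(y, y') ≤ w̄_t²(y') for all y, y' ∈ X (t = 2,…,T), then Ẑ(x) ≤ Z̄_{k_{1:T}}(x). -/
open Finset

noncomputable section

/- We index time by `Fin (T + 1)`, i.e. the state sequence has length `T + 1 ≥ 1`;
the paper's incremental weights `w_t`, `t = 2, …, T`, become `wt t`, `t : Fin T`. -/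

/-- Path weight `w(x_{1:T}) = w₁(x₁) ∏_{t=2}^T w_t(x_{t-1}, x_t)`. -/
def pathW {X : Type*} (T : ℕ) (w1 : X → ℝ) (wt : Fin T → X → X → ℝ)
    (z : Fin (T + 1) → X) : ℝ :=
  w1 (z 0) * ∏ t : Fin T, wt t (z t.castSucc) (z t.succ)

/-- The ensemble estimate `Ẑ(x) = N^{-T} ∑_{i_{1:T} ∈ [N]^T} w(x^{i_{1:T}})`. -/
def dZhat {X : Type*} (T N : ℕ) (w1 : X → ℝ) (wt : Fin T → X → X → ℝ)
    (x : Fin (T + 1) → Fin N → X) : ℝ :=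
  ((N : ℝ) ^ (T + 1))⁻¹ * ∑ i : Fin (T + 1) → Fin N, pathW T w1 wt (fun t => x t (i t))

/-- The upper bound `Z̄_{k_{1:T}}(x)` built from the modified weights `m₁, m_t`. -/
def dZbar {X : Type*} (T N : ℕ) (w1 : X → ℝ) (wt : Fin T → X → X → ℝ)
    (wbar1 : ℝ) (wbar : Fin T → ℝ) (wbar1f wbar2f : Fin T → X → ℝ)
    (k : Fin (T + 1) → Fin N) (x : Fin (T + 1) → Fin N → X) : ℝ :=
  ((N : ℝ) ^ (T + 1))⁻¹ * ∑ i : Fin (T + 1) → Fin N,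
    (if i 0 = k 0 then wbar1 else w1 (x 0 (i 0))) *
    ∏ t : Fin T,
      if i t.castSucc = k t.castSucc then
        (if i t.succ = k t.succ then wbar t else wbar2f t (x t.succ (i t.succ)))
      else
        (if i t.succ = k t.succ then wbar1f t (x t.castSucc (i t.castSucc))
         else wt t (x t.castSucc (i t.castSucc)) (x t.succ (i t.succ)))

section Monotonicity

variable {R : Type*} [CommSemiring R] [PartialOrder R] [IsOrderedRing R]

theorem mul_prod_le_mul_prod {ι : Type*} {s : Finset ι} {a b : R} {f g : ι → R}
    (ha : 0 ≤ a) (hab : a ≤ b) (hf : ∀ i ∈ s, 0 ≤ f i) (hfg : ∀ i ∈ s, f i ≤ g i) :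
    a * ∏ i ∈ s, f i ≤ b * ∏ i ∈ s, g i :=
  mul_le_mul hab (prod_le_prod hf hfg) (prod_nonneg hf) (ha.trans hab)

end Monotonicity

section IteBounds

variable {α : Type*} [Preorder α] {p q : Prop} [Decidable p] [Decidable q]

theorem le_ite_self {a b : α} (h : a ≤ b) : a ≤ if p then b else a := by
  split_ifs
  exacts [h, le_rfl]

theorem le_ite_ite_self {a b c d : α} (hb : a ≤ b) (hc : a ≤ c) (hd : a ≤ d) :
    a ≤ if p then (if q then d else c) else (if q then b else a) := by
  split_ifs
  exacts [hd, hc, hb, le_rfl]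

end IteBounds

theorem dZhat_le_dZbar_general
    {X : Type*} (T N : ℕ)
    (w1 : X → ℝ) (wt : Fin T → X → X → ℝ)
    (hw1nn : ∀ y, 0 ≤ w1 y) (hwtnn : ∀ t y y', 0 ≤ wt t y y')
    (wbar1 : ℝ) (wbar : Fin T → ℝ) (wbar1f wbar2f : Fin T → X → ℝ)
    (hw1le : ∀ y, w1 y ≤ wbar1)
    (hwtle : ∀ t y y', wt t y y' ≤ wbar t)
    (hwtle1 : ∀ t y y', wt t y y' ≤ wbar1f t y)
    (hwtle2 : ∀ t y y', wt t y y' ≤ wbar2f t y')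
    (x : Fin (T + 1) → Fin N → X) (k : Fin (T + 1) → Fin N) :
    dZhat T N w1 wt x ≤ dZbar T N w1 wt wbar1 wbar wbar1f wbar2f k x := by
  unfold dZhat dZbar pathW
  refine mul_le_mul_of_nonneg_left (sum_le_sum fun i _ => ?_) (by positivity)
  apply mul_prod_le_mul_prod (hw1nn _) (le_ite_self (hw1le _)) (fun t _ => hwtnn _ _ _)
  exact fun t _ => le_ite_ite_self (hwtle1 _ _ _) (hwtle2 _ _ _) (hwtle _ _ _)

/-- The output of the bounding HMM recursion dominates the ensemble
estimator: `Ẑ(x) ≤ Z̄_{k_{1:T}}(x)`. -/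
theorem dZhat_le_dZbar
    {X : Type*} (T N : ℕ) (hN : 1 ≤ N)
    (w1 : X → ℝ) (wt : Fin T → X → X → ℝ)
    (hw1nn : ∀ y, 0 ≤ w1 y) (hwtnn : ∀ t y y', 0 ≤ wt t y y')
    (wbar1 : ℝ) (wbar : Fin T → ℝ) (wbar1f wbar2f : Fin T → X → ℝ)
    (hwbar1fnn : ∀ t y, 0 ≤ wbar1f t y) (hwbar2fnn : ∀ t y, 0 ≤ wbar2f t y)
    (hw1le : ∀ y, w1 y ≤ wbar1)
    (hwtle : ∀ t y y', wt t y y' ≤ wbar t)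
    (hwtle1 : ∀ t y y', wt t y y' ≤ wbar1f t y)
    (hwtle2 : ∀ t y y', wt t y y' ≤ wbar2f t y')
    (x : Fin (T + 1) → Fin N → X) (k : Fin (T + 1) → Fin N) :
    dZhat T N w1 wt x ≤ dZbar T N w1 wt wbar1 wbar wbar1f wbar2f k x :=
  dZhat_le_dZbar_general T N w1 wt hw1nn hwtnn wbar1 wbar wbar1f wbar2f hw1le hwtle hwtle1 hwtle2 x
    k
end
end

section
/- Factorized toy model bound (inequality (18)): suppose the incremental weights are w₁(y) = v(y) and w_t(y, y') = v(y') for t = 2,…,T, where v : X → (0,∞) is measurable with v ≤ w̄₁ pointwise, all proposal densities equal q₁, and 𝒵 := ∫_X v(y) q₁(y) dμ(y) ∈ (0,∞), so that Z = 𝒵^T. With bounding quantities w̄₁ (for m₁ and all m_t(·, k_t) and m_t(k_{t−1}, k_t) replacements, i.e. w̄_t := w̄₁, w̄_t¹ ≡ w̄₁) and w̄_t²(y') := v(y'), the average acceptance probability of dynamic Ensemble Rejection Sampling satisfies p_ERS ≥ (N𝒵)^T / ((N − 1)𝒵 + w̄₁)^T. -/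
/-!
Since every transition weight depends only on the new state, the path weight of `x^{k_{1:T}}`
factorizes over time, and so do `Ẑ` and `Z̄_k`: replacing the weights of the chosen index `k_t`
by `w̄₁` turns the factor `∑_j v(x_t^j)` of `Ẑ` into `∑_{j ≠ k_t} v(x_t^j) + w̄₁`. Hence the
integrand is a product over time of the static integrand
`∏_i q₁(y_i) · ∑_j v(y_j) / (∑_{i ≠ j} v(y_i) + w̄₁)`, and `p_ERS` is the `T`-th power of its
integral. That integral is bounded below through the tangent line of `u ↦ 1/u` at
`c = (N - 1)𝒵 + w̄₁`: `1/u ≥ (2c - u)/c²` is affine in the other samples, so it integrates exactly,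
to `𝒵/c` per index `j`.
-/

open MeasureTheory Finset

noncomputable section

section StaticBound

variable {X ι : Type*} [Fintype ι] [DecidableEq ι] {q v : X → ℝ} {w : ℝ}

theorem two_mul_sub_div_sq_le_inv (c : ℝ) {u : ℝ} (hu : 0 < u) : (2 * c - u) / c ^ 2 ≤ u⁻¹ := by
  rcases eq_or_ne c 0 with rfl | hc
  · simpa using hu.le
  rw [div_le_iff₀ (by positivity), ← sub_nonneg]
  have : u⁻¹ * c ^ 2 - (2 * c - u) = (c - u) ^ 2 / u := by field_simp; ring
  rw [this]
  positivity

theorem prod_mul_prod_eq_prod_ite (s : Finset ι) (y : ι → X) :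
    (∏ i, q (y i)) * ∏ i ∈ s, v (y i) = ∏ i, if i ∈ s then v (y i) * q (y i) else q (y i) := by
  rw [← Fintype.prod_ite_mem s, ← prod_mul_distrib]
  refine prod_congr rfl fun i _ => ?_
  split_ifs <;> ring

/-- The acceptance integrand of static ensemble rejection sampling with `N = card ι` proposals,
when the weight of the selected sample is bounded by `w` in `Z̄`. -/
def staticERSIntegrand (q v : X → ℝ) (w : ℝ) (y : ι → X) : ℝ :=
  (∏ i, q (y i)) * ∑ j, v (y j) / (∑ i ∈ univ.erase j, v (y i) + w)

/-- The tangent line of `u ↦ 1/u` at `c`, evaluated at `u = ∑_{i ≠ j} v(y_i) + w`, in place of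
`1/u` in the `j`-th summand of `staticERSIntegrand`. -/
def tangentMinorant (q v : X → ℝ) (w c : ℝ) (j : ι) (y : ι → X) : ℝ :=
  (∏ i, q (y i)) * v (y j) * (2 * c - (∑ i ∈ univ.erase j, v (y i) + w)) / c ^ 2

theorem tangentMinorant_le (hq0 : ∀ x, 0 ≤ q x) (hv0 : ∀ x, 0 ≤ v x) (hw : 0 < w) (c : ℝ)
    (j : ι) (y : ι → X) :
    tangentMinorant q v w c j y
      ≤ (∏ i, q (y i)) * (v (y j) / (∑ i ∈ univ.erase j, v (y i) + w)) := by
  have hD : 0 < ∑ i ∈ univ.erase j, v (y i) + w := by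
    linarith [sum_nonneg fun i (_ : i ∈ univ.erase j) => hv0 (y i)]
  rw [tangentMinorant, mul_div_assoc, mul_assoc, div_eq_mul_inv (v (y j))]
  exact mul_le_mul_of_nonneg_left
    (mul_le_mul_of_nonneg_left (two_mul_sub_div_sq_le_inv c hD) (hv0 _))
    (prod_nonneg fun i _ => hq0 _)

theorem tangentMinorant_eq (c : ℝ) (j : ι) (y : ι → X) :
    tangentMinorant q v w c j y
      = ((2 * c - w) * ((∏ i, q (y i)) * ∏ k ∈ {j}, v (y k))
        - ∑ i ∈ univ.erase j, (∏ i, q (y i)) * ∏ k ∈ {j, i}, v (y k)) / c ^ 2 := by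
  have hpair : ∀ i ∈ univ.erase j, (∏ i, q (y i)) * ∏ k ∈ {j, i}, v (y k)
      = (∏ i, q (y i)) * v (y j) * v (y i) := fun i hi => by
    rw [prod_pair (ne_of_mem_erase hi).symm, mul_assoc]
  rw [tangentMinorant, prod_singleton, sum_congr rfl hpair, ← mul_sum]
  ring

variable [MeasurableSpace X] {μ : Measure X}

theorem integrable_pi_prod_mul_prod [SigmaFinite μ] (hq : Integrable q μ)
    (hvq : Integrable (fun x => v x * q x) μ) (s : Finset ι) :
    Integrable (fun y => (∏ i, q (y i)) * ∏ i ∈ s, v (y i)) (Measure.pi fun _ : ι => μ) := by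
  simp_rw [prod_mul_prod_eq_prod_ite]
  refine Integrable.fintype_prod (f := fun i x => if i ∈ s then v x * q x else q x) fun i => ?_
  split_ifs
  exacts [hvq, hq]

theorem integral_pi_prod_mul_prod [SigmaFinite μ] (hq : ∫ x, q x ∂μ = 1) (s : Finset ι) :
    ∫ y, (∏ i, q (y i)) * ∏ i ∈ s, v (y i) ∂(Measure.pi fun _ : ι => μ)
      = (∫ x, v x * q x ∂μ) ^ #s := by
  simp_rw [prod_mul_prod_eq_prod_ite]
  rw [integral_fintype_prod_eq_prod (fun i x => if i ∈ s then v x * q x else q x)]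
  have hfactor : ∀ i, ∫ x, (if i ∈ s then v x * q x else q x) ∂μ
      = if i ∈ s then ∫ x, v x * q x ∂μ else 1 := fun i => by
    split_ifs
    exacts [rfl, hq]
  simp_rw [hfactor, Fintype.prod_ite_mem, prod_const]

theorem integral_mul_le_of_le (hq0 : ∀ x, 0 ≤ q x) (hq : ∫ x, q x ∂μ = 1)
    (hvq : Integrable (fun x => v x * q x) μ) (hvw : ∀ x, v x ≤ w) :
    ∫ x, v x * q x ∂μ ≤ w :=
  calc ∫ x, v x * q x ∂μ
      ≤ ∫ x, w * q x ∂μ := integral_mono hvq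
        ((Integrable.of_integral_ne_zero (by simp [hq])).const_mul w)
        fun x => mul_le_mul_of_nonneg_right (hvw x) (hq0 x)
    _ = w := by rw [integral_const_mul, hq, mul_one]

theorem integrable_pi_mul_div_sum_erase_add [SigmaFinite μ]
    (hqm : Measurable q) (hq0 : ∀ x, 0 ≤ q x) (hq : Integrable q μ) (hvm : Measurable v)
    (hv0 : ∀ x, 0 ≤ v x) (hvq : Integrable (fun x => v x * q x) μ) (hw : 0 < w) (j : ι) :
    Integrable (fun y => (∏ i, q (y i)) * (v (y j) / (∑ i ∈ univ.erase j, v (y i) + w)))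
      (Measure.pi fun _ : ι => μ) := by
  refine (((integrable_pi_prod_mul_prod hq hvq {j}).div_const w)).mono' (by fun_prop)
    (.of_forall fun y => ?_)
  have hP : 0 ≤ ∏ i, q (y i) := prod_nonneg fun i _ => hq0 _
  have hs : 0 ≤ ∑ i ∈ univ.erase j, v (y i) := sum_nonneg fun i _ => hv0 _
  rw [Real.norm_of_nonneg (mul_nonneg hP (div_nonneg (hv0 _) (by linarith))), prod_singleton,
    mul_div_assoc]
  gcongr
  · exact hv0 _
  · linarith

theorem integrable_tangentMinorant [SigmaFinite μ] (hq : Integrable q μ)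
    (hvq : Integrable (fun x => v x * q x) μ) (c : ℝ) (j : ι) :
    Integrable (tangentMinorant q v w c j) (Measure.pi fun _ : ι => μ) := by
  simp_rw [funext (tangentMinorant_eq c j)]
  exact (((integrable_pi_prod_mul_prod hq hvq _).const_mul _).sub
    (integrable_finsetSum _ fun i _ => integrable_pi_prod_mul_prod hq hvq _)).div_const _

theorem integral_tangentMinorant [SigmaFinite μ] (hq : ∫ x, q x ∂μ = 1)
    (hvq : Integrable (fun x => v x * q x) μ) (c : ℝ) (j : ι) :
    ∫ y, tangentMinorant q v w c j y ∂(Measure.pi fun _ : ι => μ)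
      = ((2 * c - w) * ∫ x, v x * q x ∂μ
        - (Fintype.card ι - 1) * (∫ x, v x * q x ∂μ) ^ 2) / c ^ 2 := by
  have hqi : Integrable q μ := .of_integral_ne_zero (by simp [hq])
  have hint := integrable_pi_prod_mul_prod (ι := ι) hqi hvq
  have hcard : ((univ.erase j).card : ℝ) = Fintype.card ι - 1 := by
    rw [card_erase_of_mem (mem_univ j), card_univ, Nat.cast_pred (Fintype.card_pos_iff.mpr ⟨j⟩)]
  simp_rw [tangentMinorant_eq c j]
  rw [integral_div, integral_sub ((hint _).const_mul _)
      (integrable_finsetSum (univ.erase j) fun i _ => hint {j, i}),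
    integral_const_mul, integral_finsetSum (univ.erase j) fun i _ => hint {j, i},
    integral_pi_prod_mul_prod hq, card_singleton, pow_one,
    sum_congr rfl fun i hi => by
      rw [integral_pi_prod_mul_prod hq, card_pair (ne_of_mem_erase hi).symm],
    sum_const, nsmul_eq_mul, hcard]

theorem div_le_integral_pi_mul_div_sum_erase_add [SigmaFinite μ]
    (hqm : Measurable q) (hq0 : ∀ x, 0 ≤ q x) (hq : ∫ x, q x ∂μ = 1) (hvm : Measurable v)
    (hv0 : ∀ x, 0 ≤ v x) (hvq : Integrable (fun x => v x * q x) μ) (hw : 0 < w) (j : ι) :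
    (∫ x, v x * q x ∂μ) / ((Fintype.card ι - 1) * ∫ x, v x * q x ∂μ + w)
      ≤ ∫ y, (∏ i, q (y i)) * (v (y j) / (∑ i ∈ univ.erase j, v (y i) + w))
          ∂(Measure.pi fun _ : ι => μ) := by
  set Z := ∫ x, v x * q x ∂μ
  set c := (Fintype.card ι - 1) * Z + w
  have hqi : Integrable q μ := .of_integral_ne_zero (by simp [hq])
  calc Z / c = ((2 * c - w) * Z - (Fintype.card ι - 1) * Z ^ 2) / c ^ 2 := by
        rcases eq_or_ne c 0 with hc | hc
        · simp [hc]
        · field_simp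
          ring
    _ = ∫ y, tangentMinorant q v w c j y ∂(Measure.pi fun _ : ι => μ) :=
        (integral_tangentMinorant hq hvq c j).symm
    _ ≤ _ := integral_mono (integrable_tangentMinorant hqi hvq c j)
        (integrable_pi_mul_div_sum_erase_add hqm hq0 hqi hvm hv0 hvq hw j)
        (tangentMinorant_le hq0 hv0 hw c j)

theorem card_mul_div_le_integral_staticERSIntegrand [SigmaFinite μ]
    (hqm : Measurable q) (hq0 : ∀ x, 0 ≤ q x) (hq : ∫ x, q x ∂μ = 1) (hvm : Measurable v)
    (hv0 : ∀ x, 0 ≤ v x) (hvq : Integrable (fun x => v x * q x) μ) (hw : 0 < w) :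
    Fintype.card ι * (∫ x, v x * q x ∂μ) / ((Fintype.card ι - 1) * ∫ x, v x * q x ∂μ + w)
      ≤ ∫ y, staticERSIntegrand q v w y ∂(Measure.pi fun _ : ι => μ) := by
  have hqi : Integrable q μ := .of_integral_ne_zero (by simp [hq])
  simp_rw [staticERSIntegrand, mul_sum]
  rw [integral_finsetSum _ fun j _ =>
      integrable_pi_mul_div_sum_erase_add hqm hq0 hqi hvm hv0 hvq hw j,
    mul_div_assoc, ← nsmul_eq_mul, ← card_univ, ← sum_const]
  exact sum_le_sum fun j _ => div_le_integral_pi_mul_div_sum_erase_add hqm hq0 hq hvm hv0 hvq hw j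

end StaticBound

section Factorization

variable {X : Type*} {T N : ℕ} {v : X → ℝ} {w : ℝ}

theorem pathW_factorized (z : Fin (T + 1) → X) :
    pathW T v (fun _ _ y' => v y') z = ∏ t, v (z t) := by
  rw [pathW, Fin.prod_univ_succ]

theorem sum_pathW_factorized (x : Fin (T + 1) → Fin N → X) :
    ∑ i : Fin (T + 1) → Fin N, pathW T v (fun _ _ y' => v y') (fun t => x t (i t))
      = ∏ t, ∑ j, v (x t j) := by
  simp_rw [pathW_factorized, Fintype.prod_sum]

theorem dZhat_factorized (x : Fin (T + 1) → Fin N → X) :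
    dZhat T N v (fun _ _ y' => v y') x = ((N : ℝ) ^ (T + 1))⁻¹ * ∏ t, ∑ j, v (x t j) := by
  rw [dZhat, sum_pathW_factorized]

theorem dZbar_factorized (k : Fin (T + 1) → Fin N) (x : Fin (T + 1) → Fin N → X) :
    dZbar T N v (fun _ _ y' => v y') w (fun _ => w) (fun _ _ => w) (fun _ y' => v y') k x
      = ((N : ℝ) ^ (T + 1))⁻¹ * ∏ t, (∑ j ∈ univ.erase (k t), v (x t j) + w) := by
  rw [dZbar]
  congr 1
  calc _ = ∑ i : Fin (T + 1) → Fin N, ∏ t, if i t = k t then w else v (x t (i t)) :=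
        sum_congr rfl fun i _ => by
          rw [Fin.prod_univ_succ]
          exact congrArg _ (prod_congr rfl fun t _ => by split_ifs <;> rfl)
    _ = ∏ t, ∑ j, if j = k t then w else v (x t j) :=
        (Fintype.prod_sum fun t j => if j = k t then w else v (x t j)).symm
    _ = _ := prod_congr rfl fun t _ => by
        rw [← add_sum_erase univ _ (mem_univ (k t)), if_pos rfl, add_comm]
        exact congrArg (· + w) (sum_congr rfl fun j hj => if_neg (ne_of_mem_erase hj))

theorem pathW_div_sum_mul_dZhat_div_dZbar (hv : ∀ y, 0 < v y) (k : Fin (T + 1) → Fin N)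
    (x : Fin (T + 1) → Fin N → X) :
    (pathW T v (fun _ _ y' => v y') (fun t => x t (k t))
        / ∑ i : Fin (T + 1) → Fin N, pathW T v (fun _ _ y' => v y') (fun t => x t (i t)))
      * (dZhat T N v (fun _ _ y' => v y') x
        / dZbar T N v (fun _ _ y' => v y') w (fun _ => w) (fun _ _ => w) (fun _ y' => v y') k x)
      = ∏ t, v (x t (k t)) / (∑ j ∈ univ.erase (k t), v (x t j) + w) := by
  have hN : ((N : ℝ) ^ (T + 1))⁻¹ ≠ 0 := by
    have := Fin.pos (k 0)
    positivity
  have hS : ∏ t, ∑ j, v (x t j) ≠ 0 :=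
    (prod_pos fun t _ => sum_pos (fun j _ => hv _) ⟨k t, mem_univ _⟩).ne'
  rw [pathW_factorized, sum_pathW_factorized, dZhat_factorized, dZbar_factorized,
    mul_div_mul_left _ _ hN, div_mul_div_cancel₀ hS, prod_div_distrib]

theorem ersIntegrand_factorized (q : X → ℝ) (hv : ∀ y, 0 < v y) (x : Fin (T + 1) → Fin N → X) :
    (∏ t, ∏ i, q (x t i)) * ∑ k : Fin (T + 1) → Fin N,
        (pathW T v (fun _ _ y' => v y') (fun t => x t (k t))
          / ∑ i : Fin (T + 1) → Fin N, pathW T v (fun _ _ y' => v y') (fun t => x t (i t)))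
        * (dZhat T N v (fun _ _ y' => v y') x
          / dZbar T N v (fun _ _ y' => v y') w (fun _ => w) (fun _ _ => w) (fun _ y' => v y') k x)
      = ∏ t, staticERSIntegrand q v w (x t) := by
  rw [sum_congr rfl fun k _ => pathW_div_sum_mul_dZhat_div_dZbar hv k x,
    ← Fintype.prod_sum fun t j => v (x t j) / (∑ i ∈ univ.erase j, v (x t i) + w),
    ← prod_mul_distrib]
  rfl

end Factorization

theorem ers_dynamic_factorized_toy_model_bound_general
    {X : Type*} [MeasurableSpace X] (μ : Measure X) [SigmaFinite μ]
    (T N : ℕ)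
    (q1 : X → ℝ) (hq1m : Measurable q1) (hq1pos : ∀ y, 0 < q1 y)
    (hq1prob : ∫ y, q1 y ∂μ = 1)
    (v : X → ℝ) (hvm : Measurable v) (hvpos : ∀ y, 0 < v y)
    (wbar1 : ℝ) (hvle : ∀ y, v y ≤ wbar1)
    (Zcal : ℝ) (hZcal : Zcal = ∫ y, v y * q1 y ∂μ) (hZcalpos : 0 < Zcal)
    (hvint : Integrable (fun y => v y * q1 y) μ) :
    ∫ x : Fin (T + 1) → Fin N → X,
        (∏ t, ∏ i, q1 (x t i)) *
          ∑ k : Fin (T + 1) → Fin N,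
            (pathW T v (fun _ _ y' => v y') (fun t => x t (k t)) /
                ∑ i : Fin (T + 1) → Fin N,
                  pathW T v (fun _ _ y' => v y') (fun t => x t (i t))) *
              (dZhat T N v (fun _ _ y' => v y') x /
                dZbar T N v (fun _ _ y' => v y') wbar1 (fun _ => wbar1)
                  (fun _ _ => wbar1) (fun _ y' => v y') k x)
        ∂(Measure.pi fun _ : Fin (T + 1) => Measure.pi fun _ : Fin N => μ)
      ≥ ((N : ℝ) * Zcal) ^ (T + 1) / (((N : ℝ) - 1) * Zcal + wbar1) ^ (T + 1) := by
  have hq0 : ∀ y, 0 ≤ q1 y := fun y => (hq1pos y).le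
  have hZw : Zcal ≤ wbar1 := hZcal ▸ integral_mul_le_of_le hq0 hq1prob hvint hvle
  have hstatic := card_mul_div_le_integral_staticERSIntegrand (ι := Fin N) hq1m hq0 hq1prob hvm
    (fun y => (hvpos y).le) hvint (hZcalpos.trans_le hZw)
  rw [← hZcal, Fintype.card_fin] at hstatic
  simp_rw [ersIntegrand_factorized q1 hvpos]
  rw [integral_fintype_prod_eq_pow, Fintype.card_fin, ← div_pow, ge_iff_le]
  refine pow_le_pow_left₀ (div_nonneg (by positivity) ?_) hstatic _
  linarith [mul_nonneg (Nat.cast_nonneg N : (0 : ℝ) ≤ N) hZcalpos.le]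

/-- Factorized toy model bound (inequality (18) of the paper):
if `w₁ = v`, `w_t(y, y') = v(y')`, all proposals equal `q₁` and
`𝒵 = ∫ v q₁ dμ ∈ (0, ∞)`, then with bounding quantities `w̄₁` (for `m₁`, all
`m_t(·, k_t)` and `m_t(k_{t-1}, k_t)`) and `w̄_t²(y') = v(y')`, the average acceptance
probability satisfies `p_ERS ≥ (N𝒵)ᵀ / ((N - 1)𝒵 + w̄₁)ᵀ`. -/
theorem ers_dynamic_factorized_toy_model_bound
    {X : Type*} [MeasurableSpace X] (μ : Measure X) [SigmaFinite μ]
    (T N : ℕ) (hN : 1 ≤ N)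
    (q1 : X → ℝ) (hq1m : Measurable q1) (hq1pos : ∀ y, 0 < q1 y)
    (hq1prob : ∫ y, q1 y ∂μ = 1)
    (v : X → ℝ) (hvm : Measurable v) (hvpos : ∀ y, 0 < v y)
    (wbar1 : ℝ) (hvle : ∀ y, v y ≤ wbar1)
    (Zcal : ℝ) (hZcal : Zcal = ∫ y, v y * q1 y ∂μ) (hZcalpos : 0 < Zcal)
    (hvint : Integrable (fun y => v y * q1 y) μ) :
    ∫ x : Fin (T + 1) → Fin N → X,
        (∏ t, ∏ i, q1 (x t i)) *
          ∑ k : Fin (T + 1) → Fin N,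
            (pathW T v (fun _ _ y' => v y') (fun t => x t (k t)) /
                ∑ i : Fin (T + 1) → Fin N,
                  pathW T v (fun _ _ y' => v y') (fun t => x t (i t))) *
              (dZhat T N v (fun _ _ y' => v y') x /
                dZbar T N v (fun _ _ y' => v y') wbar1 (fun _ => wbar1)
                  (fun _ _ => wbar1) (fun _ y' => v y') k x)
        ∂(Measure.pi fun _ : Fin (T + 1) => Measure.pi fun _ : Fin N => μ)
      ≥ ((N : ℝ) * Zcal) ^ (T + 1) / (((N : ℝ) - 1) * Zcal + wbar1) ^ (T + 1) :=
  ers_dynamic_factorized_toy_model_bound_general μ T N q1 hq1m hq1pos hq1prob v hvm hvpos wbar1 hvle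
    Zcal hZcal hZcalpos hvint
end
end
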